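/- arXiv:2104.14448 — 2 statements merged into one kernel-verified Lean document; each statement's English description precedes it below -/
import Mathlib

section
/- Let λ : [0,∞) → [0,1] be smooth with {λ > 0} = [0,1) and λ ≡ 1 near 0. Then for every R > 0 there exists C > 0 such that the function S(z₁, z') := λ(|z₁|²)·|z'|² + C·|z₁|² is plurisubharmonic on ℂ × B(0,R) ⊂ ℂ × ℂ^{n-1}. -/
open Complex Metric MeasureTheory Real Set

/-- The average of `f` over the circle of radius `r` centered at `z`. -/
noncomputable def cAvg (f : ℂ → ℝ) (z : ℂ) (r : ℝ) : ℝ :=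
  (2 * Real.pi)⁻¹ * ∫ θ in (0:ℝ)..(2 * Real.pi), f (z + (r : ℂ) * Complex.exp (θ * Complex.I))

/-- Sub-mean value property of `f` at `z` with respect to circles whose closed discs lie in `U`. -/
def SubmeanAt (f : ℂ → ℝ) (U : Set ℂ) (z : ℂ) : Prop :=
  ∀ r : ℝ, 0 < r → closedBall z r ⊆ U → f z ≤ cAvg f z r

/-- A real-valued function is subharmonic on `U` if it is upper semicontinuous on `U` and
satisfies the sub-mean value inequality there. -/
def SubharmonicOn (f : ℂ → ℝ) (U : Set ℂ) : Prop :=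
  UpperSemicontinuousOn f U ∧ ∀ z ∈ U, SubmeanAt f U z

/-- A `[-∞,∞)`-valued function is subharmonic on `U` if it is upper semicontinuous on `U`,
nowhere `+∞`, not identically `-∞`, and all of its truncations `max (f ·) (-n)` satisfy the
sub-mean value inequality on `U`. -/
def SubharmonicOnE (f : ℂ → EReal) (U : Set ℂ) : Prop :=
  UpperSemicontinuousOn f U ∧ (∀ z ∈ U, f z < ⊤) ∧ (∃ z ∈ U, f z ≠ ⊥) ∧
  ∀ n : ℕ, ∀ z ∈ U, SubmeanAt (fun w => (max (f w) ((-(n:ℝ) : ℝ) : EReal)).toReal) U z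

/-- A real-valued function on a complex normed space is plurisubharmonic on `U` if it is upper
semicontinuous on `U` and satisfies the sub-mean value inequality along every complex line. -/
def PshOn {E : Type*} [NormedAddCommGroup E] [NormedSpace ℂ E]
    (f : E → ℝ) (U : Set E) : Prop :=
  UpperSemicontinuousOn f U ∧
  ∀ z ∈ U, ∀ v : E, ∀ r : ℝ, 0 < r → (∀ t : ℂ, ‖t‖ ≤ r → z + t • v ∈ U) →
    f z ≤ (2 * Real.pi)⁻¹ *
      ∫ θ in (0:ℝ)..(2 * Real.pi), f (z + ((r : ℂ) * Complex.exp (θ * Complex.I)) • v)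

/-- Strict plurisubharmonicity on `U` (in the sense of Harz–Shcherbina–Tomassini): every small
perturbation by a smooth compactly supported function stays plurisubharmonic. -/
def StrictPshOn {E : Type*} [NormedAddCommGroup E] [NormedSpace ℝ E] [NormedSpace ℂ E]
    (f : E → ℝ) (U : Set E) : Prop :=
  ∀ g : E → ℝ, ContDiff ℝ (⊤ : ℕ∞) g → HasCompactSupport g → tsupport g ⊆ U →
    ∃ ε₀ : ℝ, 0 < ε₀ ∧ ∀ ε : ℝ, |ε| < ε₀ → PshOn (fun z => f z + ε * g z) U

/-- `f` is strictly plurisubharmonic near `z`. -/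
def StrictPshNear {E : Type*} [NormedAddCommGroup E] [NormedSpace ℝ E] [NormedSpace ℂ E]
    (f : E → ℝ) (z : E) : Prop :=
  ∃ V : Set E, IsOpen V ∧ z ∈ V ∧ StrictPshOn f V

/-- The core of `Ω` with respect to `C^k`-smooth plurisubharmonic functions that are bounded
from above. -/
def pshCore {E : Type*} [NormedAddCommGroup E] [NormedSpace ℝ E] [NormedSpace ℂ E]
    (k : ℕ∞) (Ω : Set E) : Set E :=
  {z ∈ Ω | ∀ f : E → ℝ, PshOn f Ω → ContDiffOn ℝ k f Ω →
     (∃ M : ℝ, ∀ w ∈ Ω, f w ≤ M) → ¬ StrictPshNear f z}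

/-- `Ω` is pseudoconvex: it is open and admits a plurisubharmonic exhaustion function. -/
def Pseudoconvex {E : Type*} [NormedAddCommGroup E] [NormedSpace ℂ E] (Ω : Set E) : Prop :=
  IsOpen Ω ∧ ∃ f : E → ℝ, PshOn f Ω ∧
    ∀ c : ℝ, ∃ K : Set E, IsCompact K ∧ K ⊆ Ω ∧ {z ∈ Ω | f z ≤ c} ⊆ K

/-- The Levi form (complex Hessian) of `S` at `z` in direction `ξ`, computed as one quarter of
the Laplacian at `t = 0` of `t ↦ S (z + t • ξ)`. -/
noncomputable def leviForm {E : Type*} [NormedAddCommGroup E] [NormedSpace ℂ E]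
    (S : E → ℝ) (z ξ : E) : ℝ :=
  (1/4) * (deriv (fun x : ℝ => deriv (fun x' : ℝ => S (z + ((x' : ℂ)) • ξ)) x) 0
    + deriv (fun y : ℝ => deriv (fun y' : ℝ => S (z + ((y' : ℂ) * Complex.I) • ξ)) y) 0)

/-!
Along a complex line through `z` in direction `ξ`, the Levi form of `S` is
`λ''|⟨z₁,ξ₁⟩|²|z'|² + λ'(|ξ₁|²|z'|² + 2 Re(conj⟨z₁,ξ₁⟩⟨z',ξ'⟩)) + λ|ξ'|² + C|ξ₁|²`,
with `λ` and its derivatives taken at `|z₁|²`. These vanish unless `|z₁| ≤ 1`, and `|z'| < R`,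
so if `M` bounds `|λ'|` and `|λ''|` then `λ''|⟨z₁,ξ₁⟩|²|z'|² + λ'|ξ₁|²|z'|² ≥ -2MR²|ξ₁|²`. The
cross term is mixed in `ξ₁` and `ξ'`; by AM-GM it is absorbed by `λ|ξ'|² + 2MR²|ξ₁|²` thanks
to the Glaeser inequality `λ'² ≤ 2Mλ`, valid for any nonnegative `λ` with `λ'' ≤ M`. Hence
`C = 4MR² + 1` works. As `λ` is constant near `0`, it extends smoothly to all of `ℝ`.
-/

theorem le_add_deriv_mul_add_sq_of_deriv_deriv_le {f : ℝ → ℝ} {M : ℝ} (hf : ContDiff ℝ 2 f)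
    (hM : ∀ t, deriv (deriv f) t ≤ M) (x y : ℝ) :
    f y ≤ f x + deriv f x * (y - x) + M / 2 * (y - x) ^ 2 := by
  rcases eq_or_ne x y with rfl | hxy
  · simp
  obtain ⟨t, -, ht⟩ :=
    taylor_mean_remainder_lagrange_iteratedDeriv hxy (hf.contDiffOn (n := 1 + 1))
  have hdiff : DifferentiableAt ℝ f x := hf.differentiable (by norm_num) x
  have hdd : iteratedDeriv 2 f t = deriv (deriv f) t := by simp [iteratedDeriv_succ]
  rw [show (1 : ℕ) = 0 + 1 from rfl, taylorWithinEval_succ, taylor_within_zero_eval,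
    iteratedDerivWithin_one, hdiff.derivWithin (uniqueDiffOn_uIcc hxy x left_mem_uIcc), hdd] at ht
  simp only [Nat.factorial, Nat.cast_one, CharP.cast_eq_zero, zero_add, mul_one, one_mul, inv_one,
    pow_one, smul_eq_mul, Nat.reduceAdd] at ht
  nlinarith [mul_le_mul_of_nonneg_right (hM t) (sq_nonneg (y - x))]

theorem sq_deriv_le_of_nonneg_of_deriv_deriv_le {f : ℝ → ℝ} {M : ℝ} (hf : ContDiff ℝ 2 f)
    (hf₀ : ∀ t, 0 ≤ f t) (hM : ∀ t, deriv (deriv f) t ≤ M) (x : ℝ) :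
    deriv f x ^ 2 ≤ 2 * M * f x := by
  have h := discrim_le_zero (a := M / 2) (b := deriv f x) (c := f x) fun s => by
    have := le_add_deriv_mul_add_sq_of_deriv_deriv_le hf hM x (x + s)
    rw [add_sub_cancel_left] at this
    linarith [hf₀ (x + s)]
  rw [discrim] at h
  linarith

theorem contDiff_comp_max_zero {n : WithTop ℕ∞} {l : ℝ → ℝ} (hl : ContDiffOn ℝ n l (Ici 0))
    {δ c : ℝ} (hδ : 0 < δ) (hc : ∀ t ∈ Ico 0 δ, l t = c) :
    ContDiff ℝ n (fun t => l (max t 0)) := by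
  refine contDiff_iff_contDiffAt.2 fun t => ?_
  rcases lt_or_ge t δ with ht | ht
  · refine (contDiffAt_const (c := c)).congr_of_eventuallyEq ?_
    filter_upwards [Iio_mem_nhds ht] with s hs
    exact hc _ ⟨le_max_right s 0, max_lt hs hδ⟩
  · have ht₀ : 0 < t := hδ.trans_le ht
    refine (hl.contDiffAt (Ici_mem_nhds ht₀)).congr_of_eventuallyEq ?_
    filter_upwards [Ioi_mem_nhds ht₀] with s hs
    rw [max_eq_left hs.le]

theorem Set.EqOn.deriv_eqOn_zero {g : ℝ → ℝ} {s : Set ℝ} {c : ℝ} (h : EqOn g (fun _ => c) s)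
    (hs : IsOpen s) : EqOn (_root_.deriv g) (fun _ => 0) s :=
  (h.deriv hs).trans fun x _ => deriv_const x c

theorem exists_abs_deriv_le_of_eqOn_const {g : ℝ → ℝ} (hg : ContDiff ℝ 2 g) {a b c₁ c₂ : ℝ}
    (ha : EqOn g (fun _ => c₁) (Iio a)) (hb : EqOn g (fun _ => c₂) (Ioi b)) :
    ∃ M, ∀ t, |deriv g t| ≤ M ∧ |deriv (deriv g) t| ≤ M := by
  have hsupp : HasCompactSupport (deriv g) := by
    refine HasCompactSupport.intro (K := Icc a b) isCompact_Icc fun t ht => ?_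
    rcases not_and_or.1 ht with ht | ht
    · exact ha.deriv_eqOn_zero isOpen_Iio (not_le.1 ht)
    · exact hb.deriv_eqOn_zero isOpen_Ioi (not_le.1 ht)
  obtain ⟨M₁, hM₁⟩ := (hg.continuous_deriv (by norm_num)).bounded_above_of_compact_support hsupp
  obtain ⟨M₂, hM₂⟩ :=
    (hg.iterate_deriv' 0 2).continuous.bounded_above_of_compact_support hsupp.deriv
  exact ⟨max M₁ M₂, fun t => ⟨(hM₁ t).trans (le_max_left _ _), (hM₂ t).trans (le_max_right _ _)⟩⟩

theorem hasDerivAt_quadratic (a b d x : ℝ) :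
    HasDerivAt (fun x => a + b * x + d * x ^ 2) (b + 2 * d * x) x := by
  refine ((((hasDerivAt_id x).const_mul b).const_add a).add
    ((hasDerivAt_pow 2 x).const_mul d)).congr_deriv ?_
  simp only [Nat.cast_ofNat, Nat.add_one_sub_one, pow_one]
  ring

theorem deriv_deriv_comp_quadratic_mul_quadratic {g : ℝ → ℝ} (hg : ContDiff ℝ 2 g)
    (a b d e f k C : ℝ) :
    deriv (fun x => deriv (fun x => g (a + b * x + d * x ^ 2) * (e + f * x + k * x ^ 2)
        + C * (a + b * x + d * x ^ 2)) x) 0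
      = deriv (deriv g) a * b ^ 2 * e + deriv g a * (2 * d * e + 2 * b * f) + 2 * k * g a
        + 2 * C * d := by
  have hg₁ : Differentiable ℝ g := hg.differentiable (by norm_num)
  have hg₂ : Differentiable ℝ (deriv g) := (hg.iterate_deriv' 1 1).differentiable (by norm_num)
  have first : ∀ x, HasDerivAt (fun x => g (a + b * x + d * x ^ 2) * (e + f * x + k * x ^ 2)
        + C * (a + b * x + d * x ^ 2))
      (deriv g (a + b * x + d * x ^ 2) * (b + 2 * d * x) * (e + f * x + k * x ^ 2)
        + g (a + b * x + d * x ^ 2) * (f + 2 * k * x) + C * (b + 2 * d * x)) x := fun x =>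
    (((hg₁ _).hasDerivAt.comp x (hasDerivAt_quadratic a b d x)).mul
      (hasDerivAt_quadratic e f k x)).add ((hasDerivAt_quadratic a b d x).const_mul C)
  simp_rw [fun x => (first x).deriv]
  have hq := hasDerivAt_quadratic a b d 0
  have hlin : ∀ u v : ℝ, HasDerivAt (fun x => u + v * x) v 0 := fun u v => by
    simpa using ((hasDerivAt_id (0 : ℝ)).const_mul v).const_add u
  have second := ((((hg₂ _).hasDerivAt.comp 0 hq).mul (hlin b (2 * d))).mul
    (hasDerivAt_quadratic e f k 0)).add (((hg₁ _).hasDerivAt.comp 0 hq).mul (hlin f (2 * k)))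
    |>.add ((hlin b (2 * d)).const_mul C)
  refine second.deriv.trans ?_
  simp only [Function.comp_apply, Pi.mul_apply, mul_zero, add_zero, ne_eq, OfNat.ofNat_ne_zero,
    not_false_eq_true, zero_pow]
  ring

theorem norm_add_ofReal_mul_smul_sq {E : Type*} [NormedAddCommGroup E] [InnerProductSpace ℂ E]
    (w v : E) (c : ℂ) (x : ℝ) :
    ‖w + ((x : ℂ) * c) • v‖ ^ 2
      = ‖w‖ ^ 2 + 2 * (c * inner ℂ w v).re * x + ‖c‖ ^ 2 * ‖v‖ ^ 2 * x ^ 2 := by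
  rw [norm_add_sq (𝕜 := ℂ), inner_smul_right, norm_smul, norm_mul, Complex.norm_real,
    Real.norm_eq_abs, mul_pow, mul_pow, sq_abs]
  simp only [RCLike.re_to_complex, Complex.mul_re, Complex.mul_im, Complex.ofReal_re,
    Complex.ofReal_im]
  ring

theorem neg_mul_le_mul_of_abs_le {a M X Y : ℝ} (ha : |a| ≤ M) (hX : 0 ≤ X) (hXY : X ≤ Y) :
    -(M * Y) ≤ a * X := by
  have := mul_le_mul ha hXY hX ((abs_nonneg a).trans ha)
  nlinarith [neg_abs_le a]

theorem leviForm_radial_expr_nonneg {M R a₀ a₁ a₂ σ w ω p c : ℝ} (hσ : 0 ≤ σ) (hw₀ : 0 ≤ w)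
    (hw : w ≤ R) (hω : 0 ≤ ω) (hp₀ : 0 ≤ p) (hp : p ≤ σ) (hc : |c| ≤ p * (w * ω))
    (ha₀ : 0 ≤ a₀) (ha₁ : a₁ ^ 2 ≤ 2 * M * a₀) (ha₁M : |a₁| ≤ M) (ha₂M : |a₂| ≤ M) :
    0 ≤ a₂ * p ^ 2 * w ^ 2 + a₁ * (σ ^ 2 * w ^ 2 + 2 * c) + a₀ * ω ^ 2
      + (4 * M * R ^ 2 + 1) * σ ^ 2 := by
  have hR : 0 ≤ R := hw₀.trans hw
  have second_order : -(M * (σ ^ 2 * R ^ 2)) ≤ a₂ * (p ^ 2 * w ^ 2) :=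
    neg_mul_le_mul_of_abs_le ha₂M (by positivity) (by gcongr)
  have diagonal : -(M * (σ ^ 2 * R ^ 2)) ≤ a₁ * (σ ^ 2 * w ^ 2) :=
    neg_mul_le_mul_of_abs_le ha₁M (by positivity) (by gcongr)
  have amgm : 2 * |a₁| * (σ * R * ω) ≤ a₀ * ω ^ 2 + 2 * M * R ^ 2 * σ ^ 2 := by
    have hM : 0 ≤ M := (abs_nonneg _).trans ha₁M
    rw [← pow_le_pow_iff_left₀ (by positivity) (by positivity) two_ne_zero]
    calc (2 * |a₁| * (σ * R * ω)) ^ 2 = 4 * a₁ ^ 2 * (σ ^ 2 * R ^ 2 * ω ^ 2) := by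
          rw [mul_pow, mul_pow, sq_abs]; ring
      _ ≤ 4 * (2 * M * a₀) * (σ ^ 2 * R ^ 2 * ω ^ 2) := by gcongr
      _ ≤ (a₀ * ω ^ 2 + 2 * M * R ^ 2 * σ ^ 2) ^ 2 := by
          nlinarith [sq_nonneg (a₀ * ω ^ 2 - 2 * M * R ^ 2 * σ ^ 2)]
  have cross : -(a₀ * ω ^ 2 + 2 * M * R ^ 2 * σ ^ 2) ≤ a₁ * (2 * c) := by
    have hc' : |c| ≤ σ * R * ω :=
      calc |c| ≤ p * (w * ω) := hc
        _ ≤ σ * (R * ω) := by gcongr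
        _ = σ * R * ω := by ring
    have : |a₁ * (2 * c)| ≤ 2 * |a₁| * (σ * R * ω) := by
      rw [abs_mul, abs_mul, abs_two, mul_left_comm, ← mul_assoc]
      gcongr
    linarith [neg_abs_le (a₁ * (2 * c))]
  linarith [sq_nonneg σ]

section LeviForm

variable {E F : Type*} [NormedAddCommGroup E] [InnerProductSpace ℂ E]
  [NormedAddCommGroup F] [InnerProductSpace ℂ F]

theorem deriv_deriv_radial_along_line {g : ℝ → ℝ} (hg : ContDiff ℝ 2 g) (C : ℝ) (z ξ : E × F)
    (c : ℂ) :
    deriv (fun x => deriv (fun x' : ℝ => g (‖(z + ((x' : ℂ) * c) • ξ).1‖ ^ 2)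
        * ‖(z + ((x' : ℂ) * c) • ξ).2‖ ^ 2 + C * ‖(z + ((x' : ℂ) * c) • ξ).1‖ ^ 2) x) 0
      = deriv (deriv g) (‖z.1‖ ^ 2) * (2 * (c * inner ℂ z.1 ξ.1).re) ^ 2 * ‖z.2‖ ^ 2
        + deriv g (‖z.1‖ ^ 2) * (2 * (‖c‖ ^ 2 * ‖ξ.1‖ ^ 2) * ‖z.2‖ ^ 2
          + 2 * (2 * (c * inner ℂ z.1 ξ.1).re) * (2 * (c * inner ℂ z.2 ξ.2).re))
        + 2 * (‖c‖ ^ 2 * ‖ξ.2‖ ^ 2) * g (‖z.1‖ ^ 2) + 2 * C * (‖c‖ ^ 2 * ‖ξ.1‖ ^ 2) := by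
  simp only [Prod.fst_add, Prod.snd_add, Prod.smul_fst, Prod.smul_snd,
    norm_add_ofReal_mul_smul_sq]
  rw [deriv_deriv_comp_quadratic_mul_quadratic hg]

theorem leviForm_radial_eq {g : ℝ → ℝ} (hg : ContDiff ℝ 2 g) (C : ℝ) (z ξ : E × F) :
    leviForm (fun p => g (‖p.1‖ ^ 2) * ‖p.2‖ ^ 2 + C * ‖p.1‖ ^ 2) z ξ
      = deriv (deriv g) (‖z.1‖ ^ 2) * ‖inner ℂ z.1 ξ.1‖ ^ 2 * ‖z.2‖ ^ 2
        + deriv g (‖z.1‖ ^ 2) * (‖ξ.1‖ ^ 2 * ‖z.2‖ ^ 2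
          + 2 * (starRingEnd ℂ (inner ℂ z.1 ξ.1) * inner ℂ z.2 ξ.2).re)
        + g (‖z.1‖ ^ 2) * ‖ξ.2‖ ^ 2 + C * ‖ξ.1‖ ^ 2 := by
  have h₁ := deriv_deriv_radial_along_line hg C z ξ 1
  have hI := deriv_deriv_radial_along_line hg C z ξ I
  simp only [mul_one] at h₁
  rw [leviForm, h₁, hI]
  simp only [one_mul, norm_one, Complex.norm_I, Complex.mul_re, Complex.I_re, Complex.I_im,
    Complex.conj_re, Complex.conj_im, ← Complex.normSq_eq_norm_sq, Complex.normSq_apply]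
  ring

theorem leviForm_radial_nonneg {g : ℝ → ℝ} (hg : ContDiff ℝ 2 g) (hg₀ : ∀ t, 0 ≤ g t)
    (hg₁ : EqOn g (fun _ => 0) (Ioi 1)) {M R : ℝ}
    (hM : ∀ t, |deriv g t| ≤ M ∧ |deriv (deriv g) t| ≤ M) (z ξ : E × F) (hz : ‖z.2‖ ≤ R) :
    0 ≤ leviForm (fun p => g (‖p.1‖ ^ 2) * ‖p.2‖ ^ 2 + (4 * M * R ^ 2 + 1) * ‖p.1‖ ^ 2) z ξ := by
  rw [leviForm_radial_eq hg]
  rcases le_or_gt ‖z.1‖ 1 with hz₁ | hz₁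
  · have hP : ‖inner ℂ z.1 ξ.1‖ ≤ ‖ξ.1‖ :=
      (norm_inner_le_norm _ _).trans (mul_le_of_le_one_left (norm_nonneg _) hz₁)
    have hPQ : |(starRingEnd ℂ (inner ℂ z.1 ξ.1) * inner ℂ z.2 ξ.2).re|
        ≤ ‖inner ℂ z.1 ξ.1‖ * (‖z.2‖ * ‖ξ.2‖) := by
      refine (Complex.abs_re_le_norm _).trans ?_
      rw [norm_mul, Complex.norm_conj]
      gcongr
      exact norm_inner_le_norm _ _
    exact leviForm_radial_expr_nonneg (norm_nonneg _) (norm_nonneg _) hz (norm_nonneg _)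
      (norm_nonneg _) hP hPQ (hg₀ _)
      (sq_deriv_le_of_nonneg_of_deriv_deriv_le hg hg₀ (fun t => (abs_le.1 (hM t).2).2) _)
      (hM _).1 (hM _).2
  · have hA : ‖z.1‖ ^ 2 ∈ Ioi 1 := one_lt_pow₀ hz₁ two_ne_zero
    have hg₁' := hg₁.deriv_eqOn_zero isOpen_Ioi
    rw [hg₁ hA, hg₁' hA, hg₁'.deriv_eqOn_zero isOpen_Ioi hA]
    have hM₀ : 0 ≤ M := (abs_nonneg _).trans (hM 0).1
    simp only [zero_mul, zero_add]
    positivity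

end LeviForm

theorem stmt_1_general (m : ℕ) (l : ℝ → ℝ)
    (hl : ContDiffOn ℝ (⊤ : ℕ∞) l (Set.Ici 0))
    (hrange : ∀ t : ℝ, 0 ≤ t → l t ∈ Set.Icc (0:ℝ) 1)
    (hsupp : ∀ t : ℝ, 0 ≤ t → (0 < l t ↔ t < 1))
    (hone : ∃ δ : ℝ, 0 < δ ∧ ∀ t ∈ Set.Ico (0:ℝ) δ, l t = 1) (R : ℝ) :
    ∃ C : ℝ, 0 < C ∧
      ∀ z : ℂ × EuclideanSpace ℂ (Fin m), ‖z.2‖ < R →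
        ∀ ξ : ℂ × EuclideanSpace ℂ (Fin m),
          0 ≤ leviForm (fun p => l (‖p.1‖ ^ 2) * ‖p.2‖ ^ 2 + C * ‖p.1‖ ^ 2) z ξ := by
  obtain ⟨δ, hδ, hl₁⟩ := hone
  set g : ℝ → ℝ := fun t => l (max t 0)
  have hg : ContDiff ℝ 2 g :=
    contDiff_comp_max_zero (hl.of_le (WithTop.coe_le_coe.2 le_top)) hδ hl₁
  have hgl : ∀ t, 0 ≤ t → g t = l t := fun t ht => by simp only [g, max_eq_left ht]
  have hg₀ : ∀ t, 0 ≤ g t := fun t => (hrange _ (le_max_right t 0)).1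
  have hg₁ : EqOn g (fun _ => 0) (Ioi 1) := fun t (ht : 1 < t) => by
    rw [hgl t (by linarith)]
    exact le_antisymm (not_lt.1 fun h => ((hsupp t (by linarith)).1 h).not_gt ht)
      (hrange t (by linarith)).1
  obtain ⟨M, hM⟩ := exists_abs_deriv_le_of_eqOn_const hg
    (fun t (ht : t < 0) => show g t = l 0 by simp only [g, max_eq_right ht.le]) hg₁
  have hM₀ : 0 ≤ M := (abs_nonneg _).trans (hM 0).1
  refine ⟨4 * M * R ^ 2 + 1, by positivity, fun z hz ξ => ?_⟩
  simp only [← hgl _ (sq_nonneg _)]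
  exact leviForm_radial_nonneg hg hg₀ hg₁ hM z ξ hz.le

theorem stmt_1 (m : ℕ) (l : ℝ → ℝ)
    (hl : ContDiffOn ℝ (⊤ : ℕ∞) l (Set.Ici 0))
    (hrange : ∀ t : ℝ, 0 ≤ t → l t ∈ Set.Icc (0:ℝ) 1)
    (hsupp : ∀ t : ℝ, 0 ≤ t → (0 < l t ↔ t < 1))
    (hone : ∃ δ : ℝ, 0 < δ ∧ ∀ t ∈ Set.Ico (0:ℝ) δ, l t = 1) (R : ℝ) (hR : 0 < R) :
    ∃ C : ℝ, 0 < C ∧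
      ∀ z : ℂ × EuclideanSpace ℂ (Fin m), ‖z.2‖ < R →
        ∀ ξ : ℂ × EuclideanSpace ℂ (Fin m),
          0 ≤ leviForm (fun p => l (‖p.1‖ ^ 2) * ‖p.2‖ ^ 2 + C * ‖p.1‖ ^ 2) z ξ :=
  stmt_1_general m l hl hrange hsupp hone R
end

section
/- Let {θ_j} be dense in [0,2π] and a_j := (1+1/j)e^{iθ_j}. There exists a continuous subharmonic function u : ℂ → ℝ such that u(a_j) = 1 for every j ∈ ℕ and u(z) = |z|² for all z in the closed unit disc 𝔻̄. -/
open Complex Metric MeasureTheory Real Set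

/-!
Near each `a j` we subtract from `|z|²` a smooth radial spike `s j`, supported in a small disc
`B(a j, r j)` disjoint from the closed unit disc and from the other discs, with depth
`|a j|² - 1` at its centre and Laplacian `≥ -2⁻ʲ`. The spike is a smoothed, cut-off multiple of
`log |z - a j|`: the logarithm is harmonic, so depth can be bought at the price of an arbitrarily
small negative Laplacian, created only in the transition region of the cut-off. The partial sums
`|z|² + ∑_{j<m} s j` are `C²` with nonnegative Laplacian, hence satisfy the sub-mean value
property on every circle, and they converge uniformly because the supports are disjoint and the
depths tend to `0`; the sub-mean value property and continuity pass to the limit.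
-/

section

open Laplacian InnerProductSpace Filter Topology Function

/-! ### Sub-mean value property of `C²` functions with nonnegative Laplacian -/

theorem hasDerivAt_intervalIntegral_of_continuous {E : Type*} [NormedAddCommGroup E]
    [NormedSpace ℝ E] {F F' : ℝ → ℝ → E} {a b : ℝ}
    (hF : Continuous (uncurry F)) (hF' : Continuous (uncurry F'))
    (hderiv : ∀ x t, HasDerivAt (F · t) (F' x t) x) (x₀ : ℝ) :
    HasDerivAt (fun x => ∫ t in a..b, F x t) (∫ t in a..b, F' x₀ t) x₀ := by
  obtain ⟨K, hK⟩ := ((isCompact_closedBall x₀ 1).prod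
    (isCompact_uIcc (a := a) (b := b))).exists_bound_of_continuousOn hF'.continuousOn
  refine (intervalIntegral.hasDerivAt_integral_of_dominated_loc_of_deriv_le (bound := fun _ => K)
    (ball_mem_nhds x₀ one_pos) ?_ ?_ ?_ ?_ intervalIntegrable_const ?_).2
  · exact .of_forall fun x => (hF.comp (Continuous.prodMk_right x)).aestronglyMeasurable
  · exact (hF.comp (Continuous.prodMk_right x₀)).intervalIntegrable _ _
  · exact (hF'.comp (Continuous.prodMk_right x₀)).aestronglyMeasurable
  · exact .of_forall fun t ht x hx => hK (x, t) ⟨ball_subset_closedBall hx, uIoc_subset_uIcc ht⟩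
  · exact .of_forall fun t _ x _ => hderiv x t

theorem cAvg_eq_circleAverage (f : ℂ → ℝ) (z : ℂ) (r : ℝ) : cAvg f z r = circleAverage f z r :=
  rfl

theorem hasDerivAt_circleMap_radius (c : ℂ) (ρ θ : ℝ) :
    HasDerivAt (fun ρ => circleMap c ρ θ) (circleMap 0 1 θ) ρ := by
  simpa [circleMap] using ((hasDerivAt_id ρ).ofReal_comp.mul_const (exp (θ * I))).const_add c

theorem laplacian_complex_apply (f : ℂ → ℝ) (z : ℂ) :
    Δ f z = fderiv ℝ (fderiv ℝ f) z 1 1 + fderiv ℝ (fderiv ℝ f) z I I := by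
  simp [laplacian_eq_iteratedFDeriv_complexPlane, iteratedFDeriv_two_apply]

theorem apply_add_apply_mul_I_of_norm_eq_one (M : ℂ →L[ℝ] ℂ →L[ℝ] ℝ) {u : ℂ} (hu : ‖u‖ = 1) :
    M u u + M (u * I) (u * I) = M 1 1 + M I I := by
  obtain ⟨x, y, rfl, hn⟩ : ∃ x y : ℝ, u = x • (1 : ℂ) + y • I ∧ x ^ 2 + y ^ 2 = 1 := by
    refine ⟨u.re, u.im, by apply Complex.ext <;> simp, ?_⟩
    have h := congrArg (· ^ 2) hu
    simp only [Complex.sq_norm, Complex.normSq_apply, one_pow] at h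
    linarith
  have huI : (x • (1 : ℂ) + y • I) * I = (-y) • (1 : ℂ) + x • I := by
    apply Complex.ext <;> simp
  rw [huI]
  simp only [map_add, map_smul, add_apply, FunLike.coe_smul, Pi.smul_apply, smul_eq_mul]
  linear_combination (M 1 1 + M I I) * hn

section SecondDerivative

variable {f₁ : ℂ → ℂ →L[ℝ] ℝ} {f₂ : ℂ → ℂ →L[ℝ] ℂ →L[ℝ] ℝ}

-- Integrate the `θ`-derivative of the periodic function
-- `θ ↦ f₁ (circleMap c ρ θ) (circleMap 0 1 θ * I)` over a period.
theorem mul_integral_circleMap_mul_I_eq (h₂ : ∀ z, HasFDerivAt f₁ (f₂ z) z)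
    (hc₂ : Continuous f₂) (c : ℂ) (ρ : ℝ) :
    ρ * ∫ θ in 0..2 * π, f₂ (circleMap c ρ θ) (circleMap 0 1 θ * I) (circleMap 0 1 θ * I) =
      ∫ θ in 0..2 * π, f₁ (circleMap c ρ θ) (circleMap 0 1 θ) := by
  have hc₁ : Continuous f₁ := continuous_iff_continuousAt.2 fun z => (h₂ z).continuousAt
  have hderiv : ∀ θ, HasDerivAt (fun θ => f₁ (circleMap c ρ θ) (circleMap 0 1 θ * I))
      (ρ * f₂ (circleMap c ρ θ) (circleMap 0 1 θ * I) (circleMap 0 1 θ * I) -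
        f₁ (circleMap c ρ θ) (circleMap 0 1 θ)) θ := by
    intro θ
    refine (((h₂ _).comp_hasDerivAt θ (hasDerivAt_circleMap c ρ θ)).clm_apply
      ((hasDerivAt_circleMap 0 1 θ).mul_const I)).congr_deriv ?_
    have e₁ : circleMap 0 ρ θ * I = ρ • (circleMap 0 1 θ * I) := by
      simp [circleMap, Complex.real_smul]; ring
    have e₂ : circleMap 0 1 θ * I * I = -circleMap 0 1 θ := by
      rw [mul_assoc, I_mul_I, mul_neg_one]
    rw [e₁, e₂, map_smul, map_neg]
    simp only [FunLike.coe_smul, Pi.smul_apply, smul_eq_mul, Function.comp_apply]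
    ring
  have hftc := intervalIntegral.integral_eq_sub_of_hasDerivAt (a := 0) (b := 2 * π)
    (fun θ _ => hderiv θ) (Continuous.intervalIntegrable (by fun_prop) _ _)
  rw [intervalIntegral.integral_sub (Continuous.intervalIntegrable (by fun_prop) _ _)
    (Continuous.intervalIntegrable (by fun_prop) _ _), intervalIntegral.integral_const_mul,
    (periodic_circleMap c ρ).eq, (periodic_circleMap 0 1).eq, sub_self] at hftc
  linarith

theorem integral_circleMap_apply_nonneg (h₂ : ∀ z, HasFDerivAt f₁ (f₂ z) z)
    (hc₂ : Continuous f₂) (hΔ : ∀ z, 0 ≤ f₂ z 1 1 + f₂ z I I) (c : ℂ) {ρ : ℝ} (hρ : 0 < ρ) :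
    0 ≤ ∫ θ in 0..2 * π, f₁ (circleMap c ρ θ) (circleMap 0 1 θ) := by
  have hc₁ : Continuous f₁ := continuous_iff_continuousAt.2 fun z => (h₂ z).continuousAt
  set B := fun ρ => ∫ θ in 0..2 * π, f₁ (circleMap c ρ θ) (circleMap 0 1 θ)
  set C := fun ρ => ∫ θ in 0..2 * π, f₂ (circleMap c ρ θ) (circleMap 0 1 θ) (circleMap 0 1 θ)
  have hB : ∀ ρ, HasDerivAt B (C ρ) ρ := fun ρ =>
    hasDerivAt_intervalIntegral_of_continuous
      (F := fun ρ θ => f₁ (circleMap c ρ θ) (circleMap 0 1 θ))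
      (F' := fun ρ θ => f₂ (circleMap c ρ θ) (circleMap 0 1 θ) (circleMap 0 1 θ))
      (by fun_prop) (by fun_prop) (fun ρ θ => by
        simpa using ((h₂ _).comp_hasDerivAt ρ (hasDerivAt_circleMap_radius c ρ θ)).clm_apply
          (hasDerivAt_const ρ (circleMap 0 1 θ))) ρ
  -- `(ρ B)' = B + ρ C` is `ρ` times the integral of the Laplacian over the circle of radius `ρ`.
  have hBC : ∀ ρ, 0 < ρ → 0 ≤ 1 * B ρ + ρ * C ρ := by
    intro ρ hρ
    dsimp only [B, C]
    rw [one_mul, ← mul_integral_circleMap_mul_I_eq h₂ hc₂, ← mul_add,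
      ← intervalIntegral.integral_add (Continuous.intervalIntegrable (by fun_prop) _ _)
        (Continuous.intervalIntegrable (by fun_prop) _ _)]
    refine mul_nonneg hρ.le (intervalIntegral.integral_nonneg (by positivity) fun θ _ => ?_)
    rw [add_comm, apply_add_apply_mul_I_of_norm_eq_one _ (by simp)]
    exact hΔ _
  have hmono : MonotoneOn (fun ρ => ρ * B ρ) (Ici 0) :=
    monotoneOn_of_hasDerivWithinAt_nonneg (convex_Ici 0)
      (fun x _ => ((hasDerivAt_id x).mul (hB x)).continuousAt.continuousWithinAt)
      (fun x _ => ((hasDerivAt_id x).mul (hB x)).hasDerivWithinAt)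
      (fun x hx => hBC x (by simpa using hx))
  have := hmono self_mem_Ici hρ.le hρ.le
  simp only [zero_mul] at this
  exact nonneg_of_mul_nonneg_right this hρ

end SecondDerivative

theorem le_circleAverage_of_laplacian_nonneg {f : ℂ → ℝ} (hf : ContDiff ℝ 2 f)
    (hΔ : ∀ z, 0 ≤ Δ f z) (c : ℂ) {R : ℝ} (hR : 0 ≤ R) : f c ≤ circleAverage f c R := by
  have hf₁ : ContDiff ℝ 1 (fderiv ℝ f) := hf.fderiv_right (by norm_num)
  have h₁ : ∀ z, HasFDerivAt f (fderiv ℝ f z) z := fun z =>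
    (hf.differentiable (by norm_num) z).hasFDerivAt
  have h₂ : ∀ z, HasFDerivAt (fderiv ℝ f) (fderiv ℝ (fderiv ℝ f) z) z := fun z =>
    (hf₁.differentiable (by norm_num) z).hasFDerivAt
  have hc : Continuous f := hf.continuous
  set A := fun ρ => ∫ θ in 0..2 * π, f (circleMap c ρ θ)
  have hA : ∀ ρ, HasDerivAt A
      (∫ θ in 0..2 * π, fderiv ℝ f (circleMap c ρ θ) (circleMap 0 1 θ)) ρ := fun ρ =>
    hasDerivAt_intervalIntegral_of_continuous (by fun_prop) (by fun_prop) (fun ρ θ =>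
      (h₁ _).comp_hasDerivAt ρ (hasDerivAt_circleMap_radius c ρ θ)) ρ
  have hmono : MonotoneOn A (Ici 0) :=
    monotoneOn_of_hasDerivWithinAt_nonneg (convex_Ici 0)
      (fun x _ => (hA x).continuousAt.continuousWithinAt) (fun x _ => (hA x).hasDerivWithinAt)
      (fun x hx => integral_circleMap_apply_nonneg h₂ (hf₁.continuous_fderiv (by norm_num))
        (fun z => laplacian_complex_apply f z ▸ hΔ z) c (by simpa using hx))
  have hA0 : A 0 = 2 * π * f c := by simp [A]
  rw [circleAverage_def, smul_eq_mul, ← div_le_iff₀' (by positivity), div_eq_inv_mul,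
    inv_inv, ← hA0]
  exact hmono self_mem_Ici hR hR

theorem le_circleAverage_of_tendstoUniformly {ι : Type*} {l : Filter ι}
    [l.IsCountablyGenerated] [l.NeBot] {F : ι → ℂ → ℝ} {u : ℂ → ℝ} (hF : ∀ i, Continuous (F i))
    (hlim : TendstoUniformly F u l) {c : ℂ} {R : ℝ}
    (hsub : ∀ i, F i c ≤ circleAverage (F i) c R) : u c ≤ circleAverage u c R := by
  have hint := ((hlim.comp (circleMap c R)).tendstoUniformlyOn
    (s := uIcc 0 (2 * π))).tendsto_intervalIntegral_of_continuousOn (μ := volume)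
    (.of_forall fun i => ((hF i).comp (continuous_circleMap c R)).continuousOn)
  simp only [circleAverage_def, smul_eq_mul] at hsub ⊢
  exact le_of_tendsto_of_tendsto' (hlim.tendsto_at c) (hint.const_mul _) hsub

/-! ### Laplacian computations -/

theorem laplacian_finset_sum {ι : Type*} (t : Finset ι) {f : ι → ℂ → ℝ}
    (hf : ∀ i ∈ t, ContDiff ℝ 2 (f i)) (z : ℂ) :
    Δ (fun w => ∑ i ∈ t, f i w) z = ∑ i ∈ t, Δ (f i) z := by
  classical
  induction t using Finset.induction_on with
  | empty => simp
  | insert i t hi ih =>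
    simp only [Finset.sum_insert hi]
    rw [← ih fun j hj => hf j (Finset.mem_insert_of_mem hj)]
    exact ((hf i (Finset.mem_insert_self i t)).contDiffAt).laplacian_add
      (ContDiff.contDiffAt (ContDiff.sum fun j hj => hf j (Finset.mem_insert_of_mem hj)))

theorem laplacian_comp_of_contDiff {h : ℝ → ℝ} {q : ℂ → ℝ} (hh : ContDiff ℝ 2 h)
    (hq : ContDiff ℝ 2 q) (z : ℂ) :
    Δ (fun w => h (q w)) z = deriv (deriv h) (q z) * (fderiv ℝ q z 1 ^ 2 + fderiv ℝ q z I ^ 2)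
      + deriv h (q z) * Δ q z := by
  have hh' : ContDiff ℝ 1 (deriv h) := (contDiff_succ_iff_deriv.1 hh).2.2
  have hq' : ContDiff ℝ 1 (fderiv ℝ q) := hq.fderiv_right (by norm_num)
  have h1 : fderiv ℝ (fun w => h (q w)) = fun w => deriv h (q w) • fderiv ℝ q w := funext fun w =>
    ((hh.differentiable (by norm_num) _).hasDerivAt.comp_hasFDerivAt w
      (hq.differentiable (by norm_num) w).hasFDerivAt).fderiv
  have h2 := ((hh'.differentiable (by norm_num) _).hasDerivAt.comp_hasFDerivAt z
    (hq.differentiable (by norm_num) z).hasFDerivAt).smul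
    (hq'.differentiable (by norm_num) z).hasFDerivAt
  rw [laplacian_complex_apply, laplacian_complex_apply, h1]
  rw [show (fun w => deriv h (q w) • fderiv ℝ q w) = (deriv h ∘ q) • fderiv ℝ q from rfl, h2.fderiv]
  simp only [add_apply, FunLike.coe_smul, Pi.smul_apply, smul_eq_mul,
    ContinuousLinearMap.smulRight_apply, Function.comp_apply]
  ring

theorem hasFDerivAt_norm_sub_sq (a z : ℂ) :
    HasFDerivAt (fun w => ‖w - a‖ ^ 2) (2 • innerSL ℝ (z - a)) z := by
  simpa using ((hasFDerivAt_id z).sub_const a).norm_sq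

theorem laplacian_norm_sub_sq (a z : ℂ) : Δ (fun w => ‖w - a‖ ^ 2) z = 4 := by
  have h1 : fderiv ℝ (fun w => ‖w - a‖ ^ 2) = fun w => 2 • innerSL ℝ (w - a) :=
    funext fun w => (hasFDerivAt_norm_sub_sq a w).fderiv
  have h2 : HasFDerivAt (fun w => 2 • innerSL ℝ (w - a)) (2 • innerSL ℝ) z := by
    exact ((innerSL ℝ).hasFDerivAt.sub_const (innerSL ℝ a)).const_smul 2
      |>.congr_of_eventuallyEq (.of_forall fun w => by simp)
  rw [laplacian_complex_apply, h1, h2.fderiv]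
  simp only [FunLike.coe_smul, Pi.smul_apply]
  rw [innerSL_apply_apply, innerSL_apply_apply, real_inner_self_eq_norm_sq,
    real_inner_self_eq_norm_sq]
  norm_num

theorem laplacian_sq_norm (z : ℂ) : Δ (fun w : ℂ => ‖w‖ ^ 2) z = 4 := by
  simpa using laplacian_norm_sub_sq 0 z

theorem laplacian_comp_norm_sub_sq {h : ℝ → ℝ} (hh : ContDiff ℝ 2 h) (a z : ℂ) :
    Δ (fun w => h (‖w - a‖ ^ 2)) z =
      4 * (deriv h (‖z - a‖ ^ 2) + ‖z - a‖ ^ 2 * deriv (deriv h) (‖z - a‖ ^ 2)) := by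
  rw [laplacian_comp_of_contDiff (q := fun w => ‖w - a‖ ^ 2) hh
    ((contDiff_norm_sq ℝ).comp (contDiff_id.sub contDiff_const)), laplacian_norm_sub_sq,
    (hasFDerivAt_norm_sub_sq a z).fderiv]
  simp [Complex.sq_norm, Complex.normSq_apply]
  ring

/-! ### Logarithmic spikes -/

noncomputable def plateau (κ σ t : ℝ) : ℝ :=
  smoothTransition (2 * t / κ - 1) * smoothTransition (2 - 2 * t / σ)

section Plateau

variable {κ σ t : ℝ}

theorem plateau_nonneg : 0 ≤ plateau κ σ t :=
  mul_nonneg (smoothTransition.nonneg _) (smoothTransition.nonneg _)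

theorem plateau_eq_zero_of_le (hκ : 0 < κ) (ht : t ≤ κ / 2) : plateau κ σ t = 0 := by
  rw [plateau, smoothTransition.zero_of_nonpos, zero_mul]
  rw [sub_nonpos, div_le_one hκ]
  linarith

theorem plateau_eq_zero_of_ge (hσ : 0 < σ) (ht : σ ≤ t) : plateau κ σ t = 0 := by
  rw [plateau, smoothTransition.zero_of_nonpos (x := 2 - _), mul_zero]
  rw [sub_nonpos, le_div_iff₀ hσ]
  linarith

theorem plateau_eq_left (hσ : 0 < σ) (ht : t ≤ σ / 2) :
    plateau κ σ t = smoothTransition (2 * t / κ - 1) := by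
  rw [plateau, smoothTransition.one_of_one_le (x := 2 - _), mul_one]
  rw [le_sub_comm, div_le_iff₀ hσ]
  linarith

theorem plateau_eq_right (hκ : 0 < κ) (ht : κ ≤ t) :
    plateau κ σ t = smoothTransition (2 - 2 * t / σ) := by
  rw [plateau, smoothTransition.one_of_one_le, one_mul]
  rw [le_sub_iff_add_le, le_div_iff₀ hκ]
  linarith

theorem plateau_eq_one (hκ : 0 < κ) (hσ : 0 < σ) (h1 : κ ≤ t) (h2 : t ≤ σ / 2) :
    plateau κ σ t = 1 := by
  rw [plateau_eq_right hκ h1, smoothTransition.one_of_one_le]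
  rw [le_sub_comm, div_le_iff₀ hσ]
  linarith

theorem contDiff_plateau {n : ℕ∞} : ContDiff ℝ n (plateau κ σ) :=
  (smoothTransition.contDiff.comp (by fun_prop)).mul (smoothTransition.contDiff.comp (by fun_prop))

theorem exists_forall_neg_le_deriv_plateau (hσ : 0 < σ) :
    ∃ C, ∀ κ, 0 < κ → κ < σ / 2 → ∀ t, -C ≤ deriv (plateau κ σ) t := by
  set G : ℝ → ℝ := fun t => smoothTransition (2 - 2 * t / σ)
  have hG : Continuous (deriv G) :=
    (smoothTransition.contDiff (n := 1).comp (by fun_prop)).continuous_deriv le_rfl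
  obtain ⟨C, hC⟩ :=
    (isCompact_Icc (a := σ / 2) (b := σ)).exists_bound_of_continuousOn hG.continuousOn
  refine ⟨max C 0, fun κ hκ hκσ t => ?_⟩
  rcases lt_or_ge t (σ / 2) with ht | ht
  · have heq : plateau κ σ =ᶠ[𝓝 t] fun t => smoothTransition (2 * t / κ - 1) :=
      eventually_of_mem (Iio_mem_nhds ht) fun x hx => plateau_eq_left hσ (le_of_lt hx)
    rw [heq.deriv_eq]
    have : Monotone fun t => smoothTransition (2 * t / κ - 1) :=
      smoothTransition.monotone.comp fun x y hxy => by gcongr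
    linarith [this.deriv_nonneg (x := t), le_max_right C 0]
  rcases le_or_gt t σ with ht' | ht'
  · have heq : plateau κ σ =ᶠ[𝓝 t] G :=
      eventually_of_mem (Ioi_mem_nhds (by linarith : κ < t)) fun x hx =>
        plateau_eq_right hκ (le_of_lt hx)
    rw [heq.deriv_eq]
    linarith [neg_abs_le (deriv G t), hC t ⟨ht, ht'⟩, le_max_left C 0, Real.norm_eq_abs (deriv G t)]
  · have heq : plateau κ σ =ᶠ[𝓝 t] fun _ => 0 :=
      eventually_of_mem (Ioi_mem_nhds ht') fun x hx => plateau_eq_zero_of_ge hσ (le_of_lt hx)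
    rw [heq.deriv_eq, deriv_const]
    linarith [le_max_right C 0]

end Plateau

-- A smoothing of `log t`: it is `log t` plus a constant on `[κ, σ / 2]`, and `0` for `t ≥ σ`.
noncomputable def logProfile (κ σ t : ℝ) : ℝ := -∫ x in t..σ, plateau κ σ x / x

section LogProfile

variable {κ σ t : ℝ}

theorem contDiff_plateau_div (hκ : 0 < κ) : ContDiff ℝ 1 fun x => plateau κ σ x / x := by
  refine contDiff_iff_contDiffAt.2 fun x => ?_
  rcases lt_or_ge x (κ / 2) with hx | hx
  · exact (contDiffAt_const (c := (0:ℝ))).congr_of_eventuallyEq (eventually_of_mem (Iio_mem_nhds hx)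
      fun y hy => by simp [plateau_eq_zero_of_le hκ (le_of_lt hy)])
  · exact contDiff_plateau.contDiffAt.div contDiffAt_id (by linarith)

theorem hasDerivAt_logProfile (hκ : 0 < κ) (t : ℝ) :
    HasDerivAt (logProfile κ σ) (plateau κ σ t / t) t := by
  have hc := (contDiff_plateau_div (σ := σ) hκ).continuous
  have := intervalIntegral.integral_hasDerivAt_left (hc.intervalIntegrable t σ)
    hc.stronglyMeasurable.stronglyMeasurableAtFilter hc.continuousAt
  exact this.neg.congr_deriv (neg_neg _)

theorem deriv_logProfile (hκ : 0 < κ) : deriv (logProfile κ σ) = fun t => plateau κ σ t / t :=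
  funext fun t => (hasDerivAt_logProfile hκ t).deriv

theorem contDiff_logProfile (hκ : 0 < κ) : ContDiff ℝ 2 (logProfile κ σ) :=
  contDiff_succ_iff_deriv (n := 1).2 ⟨fun t => (hasDerivAt_logProfile hκ t).differentiableAt,
    by simp, by rw [deriv_logProfile hκ]; exact contDiff_plateau_div hκ⟩

theorem mul_deriv_logProfile (hκ : 0 < κ) (t : ℝ) :
    t * deriv (logProfile κ σ) t = plateau κ σ t := by
  rw [deriv_logProfile hκ]
  rcases eq_or_ne t 0 with rfl | ht
  · simp [plateau_eq_zero_of_le hκ (by linarith : (0:ℝ) ≤ κ / 2)]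
  · field_simp

theorem monotone_logProfile (hκ : 0 < κ) : Monotone (logProfile κ σ) :=
  monotone_of_deriv_nonneg (fun t => (hasDerivAt_logProfile hκ t).differentiableAt) fun t => by
    rw [deriv_logProfile hκ]
    rcases le_or_gt t 0 with ht | ht
    · simp [plateau_eq_zero_of_le hκ (by linarith : t ≤ κ / 2)]
    · exact div_nonneg plateau_nonneg ht.le

theorem logProfile_eq_zero_of_ge (hσ : 0 < σ) (ht : σ ≤ t) : logProfile κ σ t = 0 := by
  rw [logProfile, intervalIntegral.integral_congr (g := fun _ => 0) fun x hx => ?_]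
  · simp
  · rw [uIcc_of_ge ht] at hx
    simp [plateau_eq_zero_of_ge hσ hx.1]

theorem logProfile_nonpos (hκ : 0 < κ) (hσ : 0 < σ) (t : ℝ) : logProfile κ σ t ≤ 0 :=
  (monotone_logProfile hκ (le_max_left t σ)).trans_eq
    (logProfile_eq_zero_of_ge hσ (le_max_right t σ))

theorem logProfile_zero_le (hκ : 0 < κ) (hκσ : κ ≤ σ / 2) :
    logProfile κ σ 0 ≤ -Real.log (σ / (2 * κ)) := by
  have hσ : 0 < σ := by linarith
  rw [logProfile, neg_le_neg_iff]
  calc Real.log (σ / (2 * κ)) = ∫ x in κ..σ / 2, x⁻¹ := by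
        rw [integral_inv_of_pos hκ (by linarith), div_div, mul_comm]
    _ = ∫ x in κ..σ / 2, plateau κ σ x / x := by
        refine intervalIntegral.integral_congr fun x hx => ?_
        rw [uIcc_of_le hκσ] at hx
        simp [plateau_eq_one hκ hσ hx.1 hx.2]
    _ ≤ ∫ x in 0..σ, plateau κ σ x / x :=
        intervalIntegral.integral_mono_interval hκ.le hκσ (by linarith)
          (ae_restrict_of_forall_mem measurableSet_Ioc fun x hx =>
            div_nonneg plateau_nonneg hx.1.le)
          ((contDiff_plateau_div hκ).continuous.intervalIntegrable _ _)

theorem exists_logProfile_zero_le (hσ : 0 < σ) {M : ℝ} (hM : 0 < M) :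
    ∃ κ, 0 < κ ∧ κ < σ / 2 ∧ logProfile κ σ 0 ≤ -M := by
  have hκσ : σ / 2 * Real.exp (-M) < σ / 2 :=
    mul_lt_of_lt_one_right (by positivity) (Real.exp_lt_one_iff.2 (by linarith))
  have hlog : Real.log (σ / (2 * (σ / 2 * Real.exp (-M)))) = M := by
    rw [show σ / (2 * (σ / 2 * Real.exp (-M))) = Real.exp M by
      rw [Real.exp_neg]; field_simp, Real.log_exp]
  exact ⟨_, by positivity, hκσ, (logProfile_zero_le (by positivity) hκσ.le).trans_eq (by rw [hlog])⟩

theorem laplacian_logProfile (hκ : 0 < κ) (a z : ℂ) :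
    Δ (fun w => logProfile κ σ (‖w - a‖ ^ 2)) z = 4 * deriv (plateau κ σ) (‖z - a‖ ^ 2) := by
  set q := ‖z - a‖ ^ 2
  have hF' : Differentiable ℝ (deriv (logProfile κ σ)) := by
    rw [deriv_logProfile hκ]; exact (contDiff_plateau_div hκ).differentiable one_ne_zero
  have hP : HasDerivAt (plateau κ σ) (1 * deriv (logProfile κ σ) q +
      q * deriv (deriv (logProfile κ σ)) q) q := by
    rw [← funext (mul_deriv_logProfile (σ := σ) hκ)]
    exact (hasDerivAt_id q).mul (hF' q).hasDerivAt
  rw [laplacian_comp_norm_sub_sq (contDiff_logProfile hκ), hP.deriv, one_mul]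

end LogProfile

theorem exists_spike (a : ℂ) {r δ β : ℝ} (hr : 0 < r) (hδ : 0 ≤ δ) (hβ : 0 < β) :
    ∃ s : ℂ → ℝ, ContDiff ℝ 2 s ∧ support s ⊆ ball a r ∧ (∀ z, -δ ≤ s z ∧ s z ≤ 0) ∧
      s a = -δ ∧ ∀ z, -β ≤ Δ s z := by
  have hσ : 0 < r ^ 2 := by positivity
  obtain ⟨C, hC⟩ := exists_forall_neg_le_deriv_plateau hσ
  set M := 4 * max C 0 * δ / β
  -- Deep enough that after rescaling to depth `δ` the negative part of the Laplacian is `≤ β`.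
  obtain ⟨κ, hκ, hκσ, hF0⟩ := exists_logProfile_zero_le hσ (by positivity : 0 < M + 1)
  set F := logProfile κ (r ^ 2)
  have hF0' : F 0 < 0 := by linarith [(by positivity : 0 ≤ M)]
  have hcF0 : δ / -F 0 * F 0 = -δ := by rw [div_neg, neg_mul, div_mul_cancel₀ δ hF0'.ne]
  set c := δ / -F 0
  have hc : 0 ≤ c := div_nonneg hδ (by linarith)
  have hs : ContDiff ℝ 2 fun z : ℂ => F (‖z - a‖ ^ 2) := (contDiff_logProfile hκ).comp
    ((contDiff_norm_sq ℝ).comp (contDiff_id.sub contDiff_const))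
  refine ⟨fun z => c * F (‖z - a‖ ^ 2), contDiff_const.mul hs, fun z hz => ?_,
    fun z => ⟨?_, mul_nonpos_of_nonneg_of_nonpos hc (logProfile_nonpos hκ hσ _)⟩,
    by simpa using hcF0, fun z => ?_⟩
  · by_contra h
    have : r ^ 2 ≤ ‖z - a‖ ^ 2 := by
      gcongr; simpa [dist_eq_norm] using h
    exact hz (by simp [F, logProfile_eq_zero_of_ge hσ this])
  · rw [← hcF0]
    exact mul_le_mul_of_nonneg_left (monotone_logProfile hκ (by positivity)) hc
  · have hslope : 4 * max C 0 * c ≤ β :=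
      calc 4 * max C 0 * c ≤ 4 * max C 0 * (δ / (M + 1)) := by
            gcongr; exact div_le_div_of_nonneg_left hδ (by positivity) (by linarith)
        _ = M * β / (M + 1) := by simp only [M]; field_simp
        _ ≤ β := by rw [div_le_iff₀ (by positivity)]; nlinarith
    rw [show (fun z => c * F (‖z - a‖ ^ 2)) = c • fun z => F (‖z - a‖ ^ 2) from rfl,
      laplacian_smul c hs.contDiffAt, laplacian_logProfile hκ, smul_eq_mul]
    nlinarith [hC κ hκ hκσ (‖z - a‖ ^ 2), le_max_left C 0]

/-! ### Sums of spikes with disjoint supports -/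

theorem norm_tsum_le_of_support_subsingleton {β E : Type*} [NormedAddCommGroup E] {f : β → E}
    (hf : (support f).Subsingleton) {ε : ℝ} (hε : 0 ≤ ε) (hle : ∀ i, ‖f i‖ ≤ ε) :
    ‖∑' i, f i‖ ≤ ε := by
  rcases hf.eq_empty_or_singleton with h | ⟨i, hi⟩
  · simp [support_eq_empty_iff.1 h, hε]
  · rw [tsum_eq_single i fun j hj => notMem_support.1 fun h => hj (by simpa [hi] using h)]
    exact hle i

theorem tendstoUniformly_sum_range_tsum {X E : Type*} [NormedAddCommGroup E] {s : ℕ → X → E}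
    (hs : Pairwise (Disjoint on fun j => support (s j))) (h0 : TendstoUniformly s 0 atTop) :
    TendstoUniformly (fun m x => ∑ j ∈ Finset.range m, s j x) (fun x => ∑' j, s j x) atTop := by
  have hsub : ∀ x, (support fun j => s j x).Subsingleton := fun x j hj k hk => by
    by_contra hjk
    exact Set.disjoint_left.1 (hs hjk) hj hk
  rw [Metric.tendstoUniformly_iff] at h0 ⊢
  intro ε hε
  obtain ⟨M, hM⟩ := eventually_atTop.1 (h0 (ε / 2) (half_pos hε))
  filter_upwards [eventually_ge_atTop M] with m hm x
  rw [dist_eq_norm, ← (summable_of_hasFiniteSupport (hsub x).finite).sum_add_tsum_nat_add m,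
    add_sub_cancel_left]
  refine (norm_tsum_le_of_support_subsingleton ((hsub x).preimage (add_left_injective m))
    (half_pos hε).le fun j => ?_).trans_lt (half_lt_self hε)
  simpa [dist_eq_norm] using (hM (j + m) (by omega) x).le

theorem continuous_and_subharmonicOn_sq_norm_add_tsum {s : ℕ → ℂ → ℝ}
    (hs : ∀ j, ContDiff ℝ 2 (s j)) (hΔ : ∀ j z, -(1 / 2 : ℝ) ^ j ≤ Δ (s j) z)
    (hdisj : Pairwise (Disjoint on fun j => support (s j))) (h0 : TendstoUniformly s 0 atTop) :
    Continuous (fun z => ‖z‖ ^ 2 + ∑' j, s j z) ∧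
      SubharmonicOn (fun z => ‖z‖ ^ 2 + ∑' j, s j z) univ := by
  set S : ℕ → ℂ → ℝ := fun m z => ‖z‖ ^ 2 + ∑ j ∈ Finset.range m, s j z
  have hSc : ∀ m, ContDiff ℝ 2 (S m) := fun m =>
    (contDiff_norm_sq ℝ).add (ContDiff.sum fun j _ => hs j)
  have hSΔ : ∀ m z, 0 ≤ Δ (S m) z := by
    intro m z
    have hsplit : Δ (S m) z = Δ (fun w : ℂ => ‖w‖ ^ 2) z +
        Δ (fun w => ∑ j ∈ Finset.range m, s j w) z :=
      (contDiff_norm_sq ℝ).contDiffAt.laplacian_add (ContDiff.sum fun j _ => hs j).contDiffAt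
    rw [hsplit, laplacian_sq_norm, laplacian_finset_sum _ fun j _ => hs j]
    have hsum := Finset.sum_le_sum fun j (_ : j ∈ Finset.range m) => hΔ j z
    rw [Finset.sum_neg_distrib] at hsum
    linarith [sum_geometric_two_le m]
  have hlim : TendstoUniformly S (fun z => ‖z‖ ^ 2 + ∑' j, s j z) atTop :=
    (show TendstoUniformly (fun (_ : ℕ) (z : ℂ) => ‖z‖ ^ 2) (fun z => ‖z‖ ^ 2) atTop from
      fun _ hu => .of_forall fun _ _ => refl_mem_uniformity hu).add
      (tendstoUniformly_sum_range_tsum hdisj h0)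
  have hu := hlim.continuous (.of_forall fun m => (hSc m).continuous)
  refine ⟨hu, hu.upperSemicontinuous.upperSemicontinuousOn _, fun z _ R hR _ => ?_⟩
  rw [cAvg_eq_circleAverage]
  exact le_circleAverage_of_tendstoUniformly (fun m => (hSc m).continuous) hlim fun m =>
    le_circleAverage_of_laplacian_nonneg (hSc m) (hSΔ m) z hR.le

theorem exists_subharmonic_of_pairwise_disjoint_ball {a : ℕ → ℂ} {r : ℕ → ℝ}
    (hr : ∀ j, 0 < r j) (hdisj : Pairwise (Disjoint on fun j => ball (a j) (r j)))
    (hdisc : ∀ j, Disjoint (closedBall 0 1) (ball (a j) (r j)))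
    (hlim : Tendsto (fun j => ‖a j‖) atTop (𝓝 1)) :
    ∃ u : ℂ → ℝ, Continuous u ∧ SubharmonicOn u univ ∧ (∀ j, u (a j) = 1) ∧
      ∀ z ∈ closedBall (0 : ℂ) 1, u z = ‖z‖ ^ 2 := by
  have ha : ∀ j, 1 < ‖a j‖ := fun j => by
    simpa using Set.disjoint_left.1 (hdisc j).symm (mem_ball_self (hr j))
  have hδ : ∀ j, 0 < ‖a j‖ ^ 2 - 1 := fun j => by nlinarith [ha j]
  choose s hs hsupp hbound hval hΔ using fun j =>
    exists_spike (a j) (hr j) (hδ j).le (by positivity : (0 : ℝ) < (1 / 2) ^ j)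
  have hdisj' : Pairwise (Disjoint on fun j => support (s j)) :=
    fun j k hjk => (hdisj hjk).mono (hsupp j) (hsupp k)
  have h0 : TendstoUniformly s 0 atTop := by
    have hδ0 : Tendsto (fun j => ‖a j‖ ^ 2 - 1) atTop (𝓝 0) := by
      simpa using (hlim.pow 2).sub_const 1
    refine Metric.tendstoUniformly_iff.2 fun ε hε => ?_
    filter_upwards [hδ0.eventually (gt_mem_nhds hε)] with j hj z
    rw [Pi.zero_apply, dist_zero_left, Real.norm_eq_abs, abs_lt]
    constructor <;> linarith [hbound j z]
  obtain ⟨hcont, hsub⟩ := continuous_and_subharmonicOn_sq_norm_add_tsum hs hΔ hdisj' h0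
  refine ⟨_, hcont, hsub, fun j => ?_, fun z hz => ?_⟩
  · have hj : a j ∈ support (s j) := by rw [mem_support, hval]; linarith [hδ j]
    rw [tsum_eq_single j fun k hk => notMem_support.1 fun h =>
      Set.disjoint_left.1 (hdisj' hk) h hj, hval]
    ring
  · have hz0 : ∀ j, s j z = 0 := fun j =>
      notMem_support.1 fun h => Set.disjoint_left.1 (hdisc j) hz (hsupp j h)
    simp [hz0]

theorem norm_sub_lt_of_mem_ball {E : Type*} [SeminormedAddCommGroup E] {a z : E} {r : ℝ}
    (hz : z ∈ ball a r) :
    ‖a‖ - r < ‖z‖ ∧ ‖z‖ < ‖a‖ + r := by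
  rw [mem_ball, dist_eq_norm] at hz
  have := abs_norm_sub_norm_le z a
  rw [abs_le] at this
  constructor <;> linarith

theorem pairwise_disjoint_ball_of_norm_eq {a : ℕ → ℂ} (ha : ∀ j, ‖a j‖ = 1 + ((j : ℝ) + 1)⁻¹) :
    Pairwise (Disjoint on fun j => ball (a j) (4 * ((j : ℝ) + 1) * ((j : ℝ) + 2))⁻¹) := by
  refine (pairwise_disjoint_on _).2 fun j k hjk => Set.disjoint_left.2 fun z hj hk => ?_
  have hjk' : (j : ℝ) + 2 ≤ (k : ℝ) + 1 := by exact_mod_cast (by omega : j + 2 ≤ k + 1)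
  have hj0 : (0 : ℝ) ≤ j := j.cast_nonneg
  have hgap : ((k : ℝ) + 1)⁻¹ + (4 * ((k : ℝ) + 1) * ((k : ℝ) + 2))⁻¹ ≤
      ((j : ℝ) + 1)⁻¹ - (4 * ((j : ℝ) + 1) * ((j : ℝ) + 2))⁻¹ :=
    calc ((k : ℝ) + 1)⁻¹ + (4 * ((k : ℝ) + 1) * ((k : ℝ) + 2))⁻¹
        ≤ ((j : ℝ) + 2)⁻¹ + (4 * ((j : ℝ) + 1) * ((j : ℝ) + 2))⁻¹ := by gcongr
      _ ≤ ((j : ℝ) + 1)⁻¹ - (4 * ((j : ℝ) + 1) * ((j : ℝ) + 2))⁻¹ := by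
        field_simp
        nlinarith
  linarith [norm_sub_lt_of_mem_ball hj, norm_sub_lt_of_mem_ball hk, ha j, ha k]

theorem disjoint_closedBall_ball_of_norm_eq {a : ℂ} {j : ℕ} (ha : ‖a‖ = 1 + ((j : ℝ) + 1)⁻¹) :
    Disjoint (closedBall 0 1) (ball a (4 * ((j : ℝ) + 1) * ((j : ℝ) + 2))⁻¹) := by
  refine Set.disjoint_left.2 fun z hz hza => ?_
  have hr : (4 * ((j : ℝ) + 1) * ((j : ℝ) + 2))⁻¹ < ((j : ℝ) + 1)⁻¹ :=
    inv_strictAnti₀ (by positivity) (by nlinarith [j.cast_nonneg (α := ℝ)])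
  have := norm_sub_lt_of_mem_ball hza
  rw [mem_closedBall, dist_zero_right] at hz
  linarith

end

theorem stmt_8_general (θ : ℕ → ℝ)
    (a : ℕ → ℂ)
    (ha : ∀ j : ℕ, a j = ((1 + ((j : ℝ) + 1)⁻¹ : ℝ) : ℂ) * Complex.exp ((θ j : ℂ) * Complex.I)) :
    ∃ u : ℂ → ℝ, Continuous u ∧ SubharmonicOn u Set.univ ∧
      (∀ j : ℕ, u (a j) = 1) ∧
      ∀ z ∈ closedBall (0:ℂ) 1, u z = ‖z‖ ^ 2 := by
  have hnorm : ∀ j : ℕ, ‖a j‖ = 1 + ((j : ℝ) + 1)⁻¹ := fun j => by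
    rw [ha j, norm_mul, Complex.norm_real, Complex.norm_exp_ofReal_mul_I, mul_one,
      Real.norm_of_nonneg (by positivity)]
  refine exists_subharmonic_of_pairwise_disjoint_ball (fun j => by positivity)
    (pairwise_disjoint_ball_of_norm_eq hnorm)
    (fun j => disjoint_closedBall_ball_of_norm_eq (hnorm j)) ?_
  simpa [hnorm] using tendsto_one_div_add_atTop_nhds_zero_nat.const_add (1 : ℝ)

theorem stmt_8 (θ : ℕ → ℝ) (hdense : Set.Icc (0:ℝ) (2 * Real.pi) ⊆ closure (Set.range θ))
    (a : ℕ → ℂ)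
    (ha : ∀ j : ℕ, a j = ((1 + ((j : ℝ) + 1)⁻¹ : ℝ) : ℂ) * Complex.exp ((θ j : ℂ) * Complex.I)) :
    ∃ u : ℂ → ℝ, Continuous u ∧ SubharmonicOn u Set.univ ∧
      (∀ j : ℕ, u (a j) = 1) ∧
      ∀ z ∈ closedBall (0:ℂ) 1, u z = ‖z‖ ^ 2 :=
  stmt_8_general θ a ha
end
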